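/- arXiv:2001.07068 — 2 statements merged into one kernel-verified Lean document; each statement's English description precedes it below -/
import Mathlib

section
/- Suppose the polynomial identity N(q)H(q) = 0 holds and the normalization N(1)F = -a(1) holds, where a(1) ≠ 0. If the DAE H(q)x[k] + L(q)y[k] + F f[k] = 0 holds for all k, and the residual is defined by r[k] satisfying a(q) r[k] = N(q)L(q) y[k] (interpreted coefficient-wise as a linear recurrence), then a(q) r[k] = -N(q)F f[k]; in particular, if f[k] = f is constant for all k and r[k] converges to a limit r_∞ as k → ∞, then r_∞ = f. -/
open Filter Matrix

/-!
Applying the row filter `N(q)` to the DAE kills the state term, because `N(q)H(q) = 0`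
coefficient-wise; what remains is `N(q)L(q)y = -N(q)F f`, which is the right-hand side of the
residual recurrence. For a constant attack `f` and a convergent residual, letting `k → ∞` in
`a(q) r = -N(q)F f` gives `a(1) r∞ = -N(1)F f = a(1) f`, and `a(1) ≠ 0` can be cancelled.
-/

theorem sum_dotProduct_mulVec_shift_eq_zero {R ι κ : Type*} [CommSemiring R] [Fintype ι]
    [Fintype κ] {p s : ℕ} (N : Fin p → ι → R) (H : Fin s → Matrix ι κ R)
    (hNH : ∀ m : ℕ,
      (∑ i : Fin p, ∑ j : Fin s, if (i : ℕ) + (j : ℕ) = m then N i ᵥ* H j else 0) = 0)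
    (x : ℤ → κ → R) (k : ℤ) :
    ∑ i : Fin p, ∑ j : Fin s, N i ⬝ᵥ H j *ᵥ x (k + (i : ℕ) + (j : ℕ)) = 0 := by
  calc ∑ i : Fin p, ∑ j : Fin s, N i ⬝ᵥ H j *ᵥ x (k + (i : ℕ) + (j : ℕ))
      = ∑ i : Fin p, ∑ j : Fin s, ∑ m ∈ Finset.range (p + s),
          (if (i : ℕ) + (j : ℕ) = m then N i ᵥ* H j else 0) ⬝ᵥ x (k + m) := by
        refine Finset.sum_congr rfl fun i _ => Finset.sum_congr rfl fun j _ => ?_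
        rw [Finset.sum_eq_single_of_mem ((i : ℕ) + j) (Finset.mem_range.mpr (by omega))
          fun m _ hm => by rw [if_neg (Ne.symm hm), zero_dotProduct],
          if_pos rfl, dotProduct_mulVec]
        push_cast
        rw [add_assoc]
    -- regroup by the total shift `m = i + j`, i.e. by the coefficients of `N(q)H(q)`
    _ = ∑ m ∈ Finset.range (p + s),
          (∑ i : Fin p, ∑ j : Fin s, if (i : ℕ) + (j : ℕ) = m then N i ᵥ* H j else 0) ⬝ᵥ
            x (k + m) := by
        simp only [sum_dotProduct]
        exact (Finset.sum_congr rfl fun i _ => Finset.sum_comm).trans Finset.sum_comm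
    _ = 0 := Finset.sum_eq_zero fun m _ => by rw [hNH m, zero_dotProduct]

theorem sum_dotProduct_mulVec_shift_of_dae {R ι κ μ : Type*} [CommRing R] [Fintype ι]
    [Fintype κ] [Fintype μ] {p s t : ℕ} (N : Fin p → ι → R) (H : Fin s → Matrix ι κ R)
    (L : Fin t → Matrix ι μ R) (F : ι → R)
    (hNH : ∀ m : ℕ,
      (∑ i : Fin p, ∑ j : Fin s, if (i : ℕ) + (j : ℕ) = m then N i ᵥ* H j else 0) = 0)
    (x : ℤ → κ → R) (y : ℤ → μ → R) (f : ℤ → R)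
    (hDAE : ∀ k : ℤ,
      (∑ j : Fin s, H j *ᵥ x (k + (j : ℕ))) + (∑ j : Fin t, L j *ᵥ y (k + (j : ℕ))) +
        f k • F = 0)
    (k : ℤ) :
    ∑ i : Fin p, ∑ j : Fin t, N i ⬝ᵥ L j *ᵥ y (k + (i : ℕ) + (j : ℕ)) =
      -∑ i : Fin p, (N i ⬝ᵥ F) * f (k + (i : ℕ)) := by
  have hfiltered : ∑ i : Fin p, N i ⬝ᵥ
      ((∑ j : Fin s, H j *ᵥ x (k + (i : ℕ) + (j : ℕ))) +
        (∑ j : Fin t, L j *ᵥ y (k + (i : ℕ) + (j : ℕ))) + f (k + (i : ℕ)) • F) = 0 :=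
    Finset.sum_eq_zero fun i _ => by rw [hDAE, dotProduct_zero]
  simp only [dotProduct_add, dotProduct_sum, dotProduct_smul, smul_eq_mul, mul_comm (f _),
    Finset.sum_add_distrib, sum_dotProduct_mulVec_shift_eq_zero N H hNH x k, zero_add]
    at hfiltered
  linear_combination hfiltered

theorem tendsto_sum_mul_shift {R : Type*} [CommSemiring R] [TopologicalSpace R]
    [ContinuousAdd R] [ContinuousMul R] {n : ℕ} (a : Fin n → R) {r : ℤ → R} {l : R}
    (hr : Tendsto r atTop (nhds l)) :
    Tendsto (fun k : ℤ => ∑ i : Fin n, a i * r (k + (i : ℕ))) atTop (nhds ((∑ i, a i) * l)) := by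
  rw [Finset.sum_mul]
  exact tendsto_finsetSum _ fun i _ =>
    (hr.comp (tendsto_atTop_add_const_right _ _ tendsto_id)).const_mul (a i)

theorem eq_of_tendsto_of_sum_mul_shift_eq {R : Type*} [Field R] [TopologicalSpace R]
    [ContinuousAdd R] [ContinuousMul R] [T2Space R] {n : ℕ} (a : Fin n → R)
    (ha : ∑ i, a i ≠ 0) {r : ℤ → R} {l c : R} (hr : Tendsto r atTop (nhds l))
    (hrec : ∀ k : ℤ, ∑ i : Fin n, a i * r (k + (i : ℕ)) = (∑ i, a i) * c) :
    l = c := by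
  have hconst : Tendsto (fun k : ℤ => ∑ i : Fin n, a i * r (k + (i : ℕ))) atTop
      (nhds ((∑ i, a i) * c)) := by
    simp only [hrec]
    exact tendsto_const_nhds
  exact mul_left_cancel₀ ha (tendsto_nhds_unique (tendsto_sum_mul_shift a hr) hconst)

/-- attack-recovery property of the residual generator.  If the polynomial
identity `N(q)H(q) = 0` and the normalization `N(1)F = -a(1)` (with `a(1) ≠ 0`) hold,
the DAE `H(q)x + L(q)y + F f = 0` holds and `a(q) r = N(q)L(q) y`, then
`a(q) r = -N(q)F f`, and for a constant attack `f` any limit of `r` equals `f`. -/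
theorem residual_generator_attack_recovery
    (nx ny nr d dL da : ℕ)
    (H : Fin 2 → Matrix (Fin nr) (Fin nx) ℝ)
    (L : Fin (dL + 1) → Matrix (Fin nr) (Fin ny) ℝ)
    (F : Fin nr → ℝ)
    (N : Fin (d + 1) → Fin nr → ℝ)
    (a : Fin (da + 1) → ℝ)
    (ha1 : (∑ i, a i) ≠ 0)
    (hNH : ∀ k : ℕ,
      (∑ i : Fin (d + 1), ∑ j : Fin 2,
        if (i : ℕ) + (j : ℕ) = k then Matrix.vecMul (N i) (H j) else 0) = 0)
    (hnorm : (∑ i, N i) ⬝ᵥ F = -(∑ i, a i))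
    (x : ℤ → Fin nx → ℝ) (y : ℤ → Fin ny → ℝ) (f : ℤ → ℝ) (r : ℤ → ℝ)
    (hDAE : ∀ k : ℤ,
      (∑ j : Fin 2, (H j).mulVec (x (k + (j : ℕ)))) +
        (∑ j : Fin (dL + 1), (L j).mulVec (y (k + (j : ℕ)))) + f k • F = 0)
    (hres : ∀ k : ℤ,
      (∑ i : Fin (da + 1), a i * r (k + (i : ℕ))) =
        ∑ i : Fin (d + 1), ∑ j : Fin (dL + 1),
          (N i) ⬝ᵥ ((L j).mulVec (y (k + (i : ℕ) + (j : ℕ)))) ) :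
    (∀ k : ℤ,
      (∑ i : Fin (da + 1), a i * r (k + (i : ℕ))) =
        -(∑ i : Fin (d + 1), ((N i) ⬝ᵥ F) * f (k + (i : ℕ)))) ∧
    (∀ (fc rinf : ℝ), (∀ k, f k = fc) →
      Tendsto r atTop (nhds rinf) → rinf = fc) := by
  have hattack : ∀ k : ℤ, ∑ i : Fin (da + 1), a i * r (k + (i : ℕ)) =
      -∑ i : Fin (d + 1), (N i ⬝ᵥ F) * f (k + (i : ℕ)) := fun k =>
    (hres k).trans (sum_dotProduct_mulVec_shift_of_dae N H L F hNH x y f hDAE k)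
  refine ⟨hattack, fun fc rinf hfc hr => eq_of_tendsto_of_sum_mul_shift_eq a ha1 hr fun k => ?_⟩
  rw [hattack k]
  simp only [hfc, ← Finset.sum_mul, ← sum_dotProduct, hnorm]
  ring
end

section
/- Let H be an m × n matrix, F an m × p matrix with columns F_1,…,F_p, and let F_{-j} denote F with its j-th column removed. There exists a row vector N with N·H = 0, N·F_{-j} = 0, and N·F_j ≠ 0 if and only if rank [H F] > rank [H F_{-j}]. -/
open Matrix

private lemma lker_mem {K : Type*} [Field K] {m : ℕ} {q : Type*} [Fintype q]
    (M : Matrix (Fin m) q K) (w : Fin m → K) :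
    w ∈ LinearMap.ker (Mᵀ.mulVecLin) ↔ w ᵥ* M = 0 := by
  rw [LinearMap.mem_ker, mulVecLin_apply, mulVec_transpose]

private lemma finrank_lker {K : Type*} [Field K] {m : ℕ} {q : Type*} [Fintype q]
    (M : Matrix (Fin m) q K) :
    M.rank + Module.finrank K (LinearMap.ker (Mᵀ.mulVecLin)) = m := by
  have h := LinearMap.finrank_range_add_finrank_ker (Mᵀ.mulVecLin)
  rw [Module.finrank_fin_fun] at h
  rw [← Matrix.rank_transpose M]
  exact h

private lemma key_row {K : Type*} [Field K] {m : ℕ} (N : Matrix (Fin 1) (Fin m) K)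
    {q : Type*} [Fintype q] (M : Matrix (Fin m) q K) :
    N * M = 0 ↔ (N 0) ᵥ* M = 0 := by
  constructor
  · intro h
    ext i
    have := congrFun (congrFun h 0) i
    simpa [mul_apply, vecMul, dotProduct] using this
  · intro h
    ext b i
    have hb : b = 0 := Subsingleton.elim _ _
    subst hb
    have := congrFun h i
    simpa [mul_apply, vecMul, dotProduct] using this

/-- attack isolability.  There is a row vector `N` with `N·H = 0`,
`N·F_{-j} = 0` and `N·F_j ≠ 0` iff `rank [H F] > rank [H F_{-j}]`. -/
theorem exists_isolating_row_iff_rank_lt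
    (K : Type*) [Field K] (m n p : ℕ)
    (H : Matrix (Fin m) (Fin n) K) (F : Matrix (Fin m) (Fin p) K) (j : Fin p)
    (Fmj : Matrix (Fin m) {i : Fin p // i ≠ j} K)
    (hFmj : ∀ a (i : {i : Fin p // i ≠ j}), Fmj a i = F a i.1)
    (Fj : Matrix (Fin m) (Fin 1) K)
    (hFj : ∀ a (b : Fin 1), Fj a b = F a j) :
    (∃ N : Matrix (Fin 1) (Fin m) K, N * H = 0 ∧ N * Fmj = 0 ∧ N * Fj ≠ 0) ↔
      (Matrix.fromCols H F).rank > (Matrix.fromCols H Fmj).rank := by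
  set A := Matrix.fromCols H Fmj with hA
  set C := Matrix.fromCols H F with hC
  set L₁ := LinearMap.ker (Aᵀ.mulVecLin) with hL₁
  set L₂ := LinearMap.ker (Cᵀ.mulVecLin) with hL₂
  -- membership characterizations
  have memA : ∀ w : Fin m → K, w ∈ L₁ ↔ w ᵥ* H = 0 ∧ w ᵥ* Fmj = 0 := by
    intro w
    rw [lker_mem, hA, vecMul_fromCols]
    constructor
    · intro h
      constructor
      · ext i; exact congrFun h (Sum.inl i)
      · ext i; exact congrFun h (Sum.inr i)
    · rintro ⟨h1, h2⟩
      ext (i | i)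
      · exact congrFun h1 i
      · exact congrFun h2 i
  have memC : ∀ w : Fin m → K, w ∈ L₂ ↔ w ᵥ* H = 0 ∧ w ᵥ* F = 0 := by
    intro w
    rw [lker_mem, hC, vecMul_fromCols]
    constructor
    · intro h
      constructor
      · ext i; exact congrFun h (Sum.inl i)
      · ext i; exact congrFun h (Sum.inr i)
    · rintro ⟨h1, h2⟩
      ext (i | i)
      · exact congrFun h1 i
      · exact congrFun h2 i
  -- relate Fmj/Fj products to F
  have hvFmj : ∀ (w : Fin m → K) (i : {i : Fin p // i ≠ j}),
      (w ᵥ* Fmj) i = (w ᵥ* F) i.1 := by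
    intro w i
    simp only [vecMul, dotProduct]
    exact Finset.sum_congr rfl fun a _ => by rw [hFmj]
  have hvFj : ∀ (w : Fin m → K) (b : Fin 1), (w ᵥ* Fj) b = (w ᵥ* F) j := by
    intro w b
    simp only [vecMul, dotProduct]
    exact Finset.sum_congr rfl fun a _ => by rw [hFj]
  -- splitting of F condition
  have hsplit : ∀ w : Fin m → K, w ᵥ* F = 0 ↔ (w ᵥ* Fmj = 0 ∧ w ᵥ* Fj = 0) := by
    intro w
    constructor
    · intro h
      constructor
      · ext i; rw [hvFmj]; exact congrFun h i.1
      · ext b; rw [hvFj]; exact congrFun h j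
    · rintro ⟨h1, h2⟩
      ext i
      by_cases hij : i = j
      · subst hij
        have := congrFun h2 0
        rwa [hvFj] at this
      · have := congrFun h1 ⟨i, hij⟩
        rwa [hvFmj] at this
  have hle : L₂ ≤ L₁ := by
    intro w hw
    rw [memC] at hw
    rw [memA]
    exact ⟨hw.1, ((hsplit w).mp hw.2).1⟩
  -- reduce LHS to vectors
  have hLHS : (∃ N : Matrix (Fin 1) (Fin m) K, N * H = 0 ∧ N * Fmj = 0 ∧ N * Fj ≠ 0)
      ↔ ∃ w : Fin m → K, w ∈ L₁ ∧ w ∉ L₂ := by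
    constructor
    · rintro ⟨N, h1, h2, h3⟩
      refine ⟨N 0, ?_, ?_⟩
      · rw [memA]
        exact ⟨(key_row N (M := H)).mp h1, (key_row N (M := Fmj)).mp h2⟩
      · rw [memC]
        rintro ⟨-, hF⟩
        exact h3 ((key_row N (M := Fj)).mpr ((hsplit (N 0)).mp hF).2)
    · rintro ⟨w, hw1, hw2⟩
      rw [memA] at hw1
      refine ⟨Matrix.of (fun _ => w), (key_row _ (M := H)).mpr hw1.1, (key_row _ (M := Fmj)).mpr hw1.2, ?_⟩
      intro hz
      apply hw2
      rw [memC]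
      refine ⟨hw1.1, (hsplit w).mpr ⟨hw1.2, (key_row _ (M := Fj)).mp hz⟩⟩
  rw [hLHS]
  -- rank/dimension bookkeeping
  have hdA : A.rank + Module.finrank K L₁ = m := finrank_lker A
  have hdC : C.rank + Module.finrank K L₂ = m := finrank_lker C
  constructor
  · rintro ⟨w, hw1, hw2⟩
    have hlt : L₂ < L₁ := lt_of_le_of_ne hle (fun h => hw2 (h ▸ hw1))
    have := Submodule.finrank_lt_finrank_of_lt hlt
    omega
  · intro hrank
    by_contra hcon
    push_neg at hcon
    have := Submodule.finrank_mono (hcon : L₁ ≤ L₂)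
    omega
end
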